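/- arXiv:1511.08751 — 2 statements merged into one kernel-verified Lean document; each statement's English description precedes it below -/
import Mathlib

section
/- Let V be a real inner product space of finite dimension m and let R be an algebraic curvature tensor on V. Suppose there exists r with 2 ≤ r ≤ m − 2 such that every r-dimensional subspace of V is special for R. Then ⟨R(v, w) v, η⟩ = 0 for all orthonormal vectors v, w, η ∈ V (i.e. R has pointwise constant sectional curvature). -/
open RealInnerProductSpace Module

/-- An algebraic curvature tensor on a real inner product space `V`. -/
structure CurvatureTensor (V : Type*) [NormedAddCommGroup V] [InnerProductSpace ℝ V] where
  R : V → V → V → V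
  lin₁ : ∀ Y Z, IsLinearMap ℝ fun X => R X Y Z
  lin₂ : ∀ X Z, IsLinearMap ℝ fun Y => R X Y Z
  lin₃ : ∀ X Y, IsLinearMap ℝ fun Z => R X Y Z
  antisymm₁ : ∀ X Y Z W, ⟪R X Y Z, W⟫ = -⟪R Y X Z, W⟫
  antisymm₂ : ∀ X Y Z W, ⟪R X Y Z, W⟫ = -⟪R X Y W, Z⟫
  pair_symm : ∀ X Y Z W, ⟪R X Y Z, W⟫ = ⟪R Z W X, Y⟫
  bianchi : ∀ X Y Z, R X Y Z + R Y Z X + R Z X Y = 0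

/-- A subspace `W` is special for `T` if for every orthonormal basis `v_1, …, v_r` of `W`
and every `w ∈ W`, one has `∑ i, R (v i) w (v i) ∈ W`. -/
def CurvatureTensor.IsSpecial {V : Type*} [NormedAddCommGroup V] [InnerProductSpace ℝ V]
    (T : CurvatureTensor V) (W : Submodule ℝ V) : Prop :=
  ∀ (b : OrthonormalBasis (Fin (finrank ℝ W)) ℝ W) (w : V), w ∈ W →
    (∑ i, T.R (b i : V) w (b i)) ∈ W

/-! For an orthonormal family `e` and indices `a ≠ b`, let `f i = ⟪R(e i, e a) e i, e b⟫`.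
If `t` is a set of `r` indices avoiding `a` and `b`, then for each `i ∈ t` the span of `e a` and
the `e j`, `j ∈ t \ {i}`, is an `r`-dimensional subspace orthogonal to `e b`; as `R(e a, e a) = 0`,
its being special says `∑_{j ∈ t \ {i}} f j = 0`. Hence every `f i` equals `∑_t f`, so
`(r - 1) • ∑_t f = 0` and, as `r ≥ 2`, all `f i` vanish. Such `e`, `a`, `b`, `t` exist around
any orthonormal triple `v, w, η` because `r + 2 ≤ dim V`. -/

theorem Finset.eq_zero_of_forall_sum_erase_eq_zero {ι M : Type*} [DecidableEq ι] [AddCommGroup M]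
    [IsAddTorsionFree M] {s : Finset ι} {f : ι → M} (hs : 2 ≤ s.card)
    (h : ∀ i ∈ s, ∑ j ∈ s.erase i, f j = 0) {i : ι} (hi : i ∈ s) : f i = 0 := by
  set S := ∑ j ∈ s, f j
  have hf : ∀ i ∈ s, f i = S := fun i hi => by
    simpa [h i hi] using Finset.add_sum_erase s f hi
  have hS : (s.card - 1) • S + S = (s.card - 1) • 0 + S := by
    rw [← succ_nsmul, Nat.sub_add_cancel (by omega), ← Finset.sum_const, smul_zero, zero_add]
    exact (Finset.sum_congr rfl hf).symm
  rw [hf i hi, nsmul_right_injective (by omega) (add_right_cancel hS)]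

namespace CurvatureTensor

variable {V : Type*} [NormedAddCommGroup V] [InnerProductSpace ℝ V] (T : CurvatureTensor V)

theorem inner_R_self_left (X Z W : V) : ⟪T.R X X Z, W⟫ = 0 := by
  linarith [T.antisymm₁ X X Z W]

theorem IsSpecial.sum_mem {T : CurvatureTensor V} {W : Submodule ℝ V} (hW : T.IsSpecial W)
    {ι : Type*} [Fintype ι] (b : OrthonormalBasis ι ℝ W) {x : V} (hx : x ∈ W) :
    ∑ i, T.R (b i) x (b i) ∈ W := by
  let e : ι ≃ Fin (finrank ℝ W) := Fintype.equivFinOfCardEq (finrank_eq_card_basis b.toBasis).symm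
  convert hW (b.reindex e) x hx using 1
  rw [← e.sum_comp]
  simp only [OrthonormalBasis.reindex_apply, Equiv.symm_apply_apply]

variable {T}

theorem sum_inner_R_eq_zero {r : ℕ}
    (hspec : ∀ W : Submodule ℝ V, finrank ℝ W = r → T.IsSpecial W)
    {ι : Type*} {e : ι → V} (he : Orthonormal ℝ e) {s : Finset ι} (hs : s.card = r)
    {j k : ι} (hj : j ∈ s) (hk : k ∉ s) :
    ∑ i ∈ s, ⟪T.R (e i) (e j) (e i), e k⟫ = 0 := by
  classical
  set W := Submodule.span ℝ (s.image e : Set V)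
  let b : OrthonormalBasis s ℝ W := OrthonormalBasis.span he s
  have hW : finrank ℝ W = r := by
    rw [finrank_eq_card_basis b.toBasis, Fintype.card_coe, hs]
  have hmem : ∑ i : s, T.R (e i) (e j) (e i) ∈ W := by
    simpa only [b, OrthonormalBasis.span_apply he s] using
      (hspec W hW).sum_mem b (Submodule.subset_span (by simpa using ⟨j, hj, rfl⟩))
  have hperp : W ≤ (ℝ ∙ e k)ᗮ := by
    refine Submodule.span_le.mpr ?_
    simp only [Finset.coe_image, Set.image_subset_iff]
    exact fun i hi => Submodule.mem_orthogonal_singleton_iff_inner_right.mpr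
      (he.inner_eq_zero (fun hik => hk (hik ▸ hi)))
  rw [← sum_inner, real_inner_comm, ← Finset.sum_coe_sort s]
  exact Submodule.mem_orthogonal_singleton_iff_inner_right.mp (hperp hmem)

theorem inner_R_eq_zero_of_card_eq {r : ℕ} (hr : 2 ≤ r)
    (hspec : ∀ W : Submodule ℝ V, finrank ℝ W = r → T.IsSpecial W)
    {ι : Type*} [DecidableEq ι] {e : ι → V} (he : Orthonormal ℝ e) {s : Finset ι}
    (hs : s.card = r + 2) {i a b : ι} (hi : i ∈ s) (ha : a ∈ s) (hb : b ∈ s)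
    (hia : i ≠ a) (hib : i ≠ b) (hab : a ≠ b) :
    ⟪T.R (e i) (e a) (e i), e b⟫ = 0 := by
  set t := (s.erase a).erase b
  have ht : t.card = r := by
    rw [Finset.card_erase_of_mem (Finset.mem_erase.mpr ⟨hab.symm, hb⟩),
      Finset.card_erase_of_mem ha, hs]
    rfl
  refine Finset.eq_zero_of_forall_sum_erase_eq_zero (s := t)
    (f := fun j => ⟪T.R (e j) (e a) (e j), e b⟫) (by omega) (fun x hx => ?_) (by simp [t, *])
  have ha' : a ∉ t.erase x := by simp [t]
  have hcard : (insert a (t.erase x)).card = r := by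
    rw [Finset.card_insert_of_notMem ha', Finset.card_erase_of_mem hx, ht]
    omega
  have := sum_inner_R_eq_zero (k := b) hspec he hcard (Finset.mem_insert_self a _)
    (by simp [t, hab.symm])
  rwa [Finset.sum_insert ha', inner_R_self_left, zero_add] at this

end CurvatureTensor

theorem constant_sectional_of_special_r_subspaces {V : Type*} [NormedAddCommGroup V] [InnerProductSpace ℝ V] [FiniteDimensional ℝ V]
    (T : CurvatureTensor V) (r : ℕ) (hr2 : 2 ≤ r) (hrm : r ≤ finrank ℝ V - 2)
    (hspec : ∀ W : Submodule ℝ V, finrank ℝ W = r → T.IsSpecial W)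
    (v w η : V) (h : Orthonormal ℝ ![v, w, η]) :
    ⟪T.R v w v, η⟫ = 0 := by
  classical
  obtain ⟨u, b, hsub, hb⟩ := h.toSubtypeRange.exists_orthonormalBasis_extension
  have hu : Orthonormal ℝ ((↑) : u → V) := hb ▸ b.orthonormal
  have hmem (i : Fin 3) : ![v, w, η] i ∈ u := Finset.mem_coe.mp (hsub (Set.mem_range_self i))
  have hne (i j : Fin 3) (hij : i ≠ j) : (⟨_, hmem i⟩ : u) ≠ ⟨_, hmem j⟩ :=
    Subtype.coe_ne_coe.mp (h.linearIndependent.injective.ne hij)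
  obtain ⟨s, hs3, -, hs⟩ := Finset.exists_subsuperset_card_eq (n := r + 2)
    (Finset.subset_univ ({⟨_, hmem 0⟩, ⟨_, hmem 1⟩, ⟨_, hmem 2⟩} : Finset u))
    (Finset.card_le_three.trans (by omega))
    (by rw [Finset.card_univ, ← finrank_eq_card_basis b.toBasis]; omega)
  exact CurvatureTensor.inner_R_eq_zero_of_card_eq hr2 hspec hu hs (hs3 (by simp))
    (hs3 (by simp)) (hs3 (by simp)) (hne 0 1 (by decide)) (hne 0 2 (by decide))
    (hne 1 2 (by decide))
end

section
/- Let (V, J, R) be an algebraic Kähler model of real dimension 2m with m ≥ 2. Then the following three conditions are equivalent: (a) ⟨R(X,JX)Y,JX⟩ = ⟨R(Y,JY)X,JY⟩ for all vectors X, Y ∈ V such that X, JX, Y, JY are orthonormal; (b) ⟨R(X,JX)Y,X⟩ = −⟨R(Y,JY)X,Y⟩ for all X, Y ∈ V such that X, JX, Y, JY are orthonormal; (c) ⟨R(X,Y)X,JY⟩ = 0 for all X, Y ∈ V such that X, JX, Y, JY are orthonormal. -/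
open RealInnerProductSpace Module

/-- An algebraic Kähler model: an algebraic curvature tensor together with a compatible
orthogonal complex structure `J`. -/
structure KahlerModel (V : Type*) [NormedAddCommGroup V] [InnerProductSpace ℝ V]
    extends CurvatureTensor V where
  J : V →ₗ[ℝ] V
  J_isometry : ∀ X Y, ⟪J X, J Y⟫ = ⟪X, Y⟫
  J_sq : ∀ X, J (J X) = -X
  R_J_invariant : ∀ X Y Z, R (J X) (J Y) Z = R X Y Z
  R_J_commute : ∀ X Y Z, R X Y (J Z) = J (R X Y Z)

/-! Write α, β, γ (`defectA`, `defectB`, `defectC`) for the difference of the two sides of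
(a), (b), (c). The Kähler symmetries give α(X, JY) = β(X, Y) and β(X, JY) = -α(X, Y), and
replacing Y by JY keeps X, JX, Y, JY orthonormal; hence (a) ⇔ (b). For (b) ⇔ (c), rotate the
pair to X' = (X + Y)/√2, Y' = (X - Y)/√2: this is an involution preserving such frames, and
since R(X + Y, X - Y) = -2 R(X, Y) a short expansion gives γ(X', Y') = β(X, Y)/2. -/

lemma inv_sqrt_two_mul_self : (√2)⁻¹ * (√2)⁻¹ = (1 / 2 : ℝ) := by
  rw [← mul_inv, Real.mul_self_sqrt zero_le_two, one_div]

lemma inv_sqrt_two_pow_four : (√2)⁻¹ ^ 4 = (1 / 4 : ℝ) := by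
  linear_combination ((√2)⁻¹ * (√2)⁻¹ + 1 / 2) * inv_sqrt_two_mul_self

lemma inv_sqrt_two_smul_add_of_add_sub {E : Type*} [AddCommGroup E] [Module ℝ E] (X Y : E) :
    (√2)⁻¹ • ((√2)⁻¹ • (X + Y) + (√2)⁻¹ • (X - Y)) = X := by
  rw [← smul_add, smul_smul, inv_sqrt_two_mul_self]
  module

lemma inv_sqrt_two_smul_sub_of_add_sub {E : Type*} [AddCommGroup E] [Module ℝ E] (X Y : E) :
    (√2)⁻¹ • ((√2)⁻¹ • (X + Y) - (√2)⁻¹ • (X - Y)) = Y := by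
  rw [← smul_sub, smul_smul, inv_sqrt_two_mul_self]
  module

namespace KahlerModel

variable {V : Type*} [NormedAddCommGroup V] [InnerProductSpace ℝ V] (T : KahlerModel V)

section Linearity

variable (X X' Y Y' Z Z' : V) (c : ℝ)

lemma R_add_left : T.R (X + X') Y Z = T.R X Y Z + T.R X' Y Z := (T.lin₁ Y Z).map_add X X'
lemma R_add_right : T.R X Y (Z + Z') = T.R X Y Z + T.R X Y Z' := (T.lin₃ X Y).map_add Z Z'
lemma R_sub_mid : T.R X (Y - Y') Z = T.R X Y Z - T.R X Y' Z := (T.lin₂ X Z).map_sub Y Y'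
lemma R_neg_mid : T.R X (-Y) Z = -T.R X Y Z := (T.lin₂ X Z).map_neg Y
lemma R_smul_left : T.R (c • X) Y Z = c • T.R X Y Z := (T.lin₁ Y Z).map_smul c X
lemma R_smul_mid : T.R X (c • Y) Z = c • T.R X Y Z := (T.lin₂ X Z).map_smul c Y
lemma R_smul_right : T.R X Y (c • Z) = c • T.R X Y Z := (T.lin₃ X Y).map_smul c Z

end Linearity

lemma R_swap (X Y Z : V) : T.R Y X Z = -T.R X Y Z :=
  ext_inner_right ℝ fun W => by rw [inner_neg_left, T.antisymm₁ X Y]; ring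

lemma R_self (X Z : V) : T.R X X Z = 0 := by
  have := T.R_swap X X Z
  rwa [eq_neg_iff_add_eq_zero, ← two_smul ℝ, smul_eq_zero, or_iff_right two_ne_zero] at this

lemma R_add_sub (X Y Z : V) : T.R (X + Y) (X - Y) Z = (-2 : ℝ) • T.R X Y Z := by
  rw [T.R_add_left, T.R_sub_mid, T.R_sub_mid, T.R_self, T.R_self, T.R_swap]
  module

lemma inner_J_left (X Y : V) : ⟪T.J X, Y⟫ = -⟪X, T.J Y⟫ := by
  rw [← T.J_isometry X (T.J Y), T.J_sq, inner_neg_right, neg_neg]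

lemma inner_self_J (X : V) : ⟪X, T.J X⟫ = 0 := by
  have := T.inner_J_left X X
  rw [real_inner_comm] at this
  linarith

lemma norm_J (X : V) : ‖T.J X‖ = ‖X‖ := by
  rw [norm_eq_sqrt_real_inner, T.J_isometry, ← norm_eq_sqrt_real_inner]

lemma inner_R_J_J (X Y Z W : V) : ⟪T.R X Y (T.J Z), T.J W⟫ = ⟪T.R X Y Z, W⟫ := by
  rw [T.R_J_commute, T.J_isometry]

lemma inner_R_J_left (X Y Z W : V) : ⟪T.R X Y (T.J Z), W⟫ = -⟪T.R X Y Z, T.J W⟫ := by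
  rw [T.R_J_commute, T.inner_J_left]

lemma orthonormal_frame_iff {X Y : V} :
    Orthonormal ℝ ![X, T.J X, Y, T.J Y] ↔
      ⟪X, X⟫ = 1 ∧ ⟪Y, Y⟫ = 1 ∧ ⟪X, Y⟫ = 0 ∧ ⟪X, T.J Y⟫ = 0 := by
  rw [orthonormal_iff_ite]
  constructor
  · intro h
    exact ⟨by simpa using h 0 0, by simpa using h 2 2, by simpa using h 0 2, by simpa using h 0 3⟩
  · rintro ⟨hX, hY, hXY, hXJY⟩ i j
    have hJXY : ⟪T.J X, Y⟫ = 0 := by rw [T.inner_J_left, hXJY, neg_zero]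
    have hJX : ⟪T.J X, X⟫ = 0 := by rw [real_inner_comm, T.inner_self_J]
    have hJY : ⟪T.J Y, Y⟫ = 0 := by rw [real_inner_comm, T.inner_self_J]
    have hX' : ‖X‖ = 1 := by rw [norm_eq_sqrt_real_inner, hX, Real.sqrt_one]
    have hY' : ‖Y‖ = 1 := by rw [norm_eq_sqrt_real_inner, hY, Real.sqrt_one]
    fin_cases i <;> fin_cases j <;>
      simp [T.J_isometry, T.inner_self_J, T.norm_J, hX', hY', hXY, hXJY, hJXY, hJX, hJY,
        real_inner_comm X Y, real_inner_comm X (T.J Y), real_inner_comm (T.J X) Y]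

lemma orthonormal_frame_J_right {X Y : V} (h : Orthonormal ℝ ![X, T.J X, Y, T.J Y]) :
    Orthonormal ℝ ![X, T.J X, T.J Y, T.J (T.J Y)] := by
  obtain ⟨hX, hY, hXY, hXJY⟩ := T.orthonormal_frame_iff.mp h
  refine T.orthonormal_frame_iff.mpr ⟨hX, ?_, hXJY, ?_⟩
  · rwa [T.J_isometry]
  · rw [T.J_sq, inner_neg_right, hXY, neg_zero]

lemma orthonormal_frame_rotate {X Y : V} (h : Orthonormal ℝ ![X, T.J X, Y, T.J Y]) :
    Orthonormal ℝ ![(√2)⁻¹ • (X + Y), T.J ((√2)⁻¹ • (X + Y)),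
      (√2)⁻¹ • (X - Y), T.J ((√2)⁻¹ • (X - Y))] := by
  obtain ⟨hX, hY, hXY, hXJY⟩ := T.orthonormal_frame_iff.mp h
  have hYJX : ⟪Y, T.J X⟫ = 0 := by rw [← neg_eq_zero, ← T.inner_J_left, real_inner_comm, hXJY]
  refine T.orthonormal_frame_iff.mpr ⟨?_, ?_, ?_, ?_⟩ <;>
    simp only [map_smul, map_sub, real_inner_smul_left, real_inner_smul_right,
      inner_add_left, inner_add_right, inner_sub_left, inner_sub_right, real_inner_comm X Y,
      T.inner_self_J, hX, hY, hXY, hXJY, hYJX]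
  · linear_combination 2 * inv_sqrt_two_mul_self
  · linear_combination 2 * inv_sqrt_two_mul_self
  · ring
  · ring

def defectA (X Y : V) : ℝ := ⟪T.R X (T.J X) Y, T.J X⟫ - ⟪T.R Y (T.J Y) X, T.J Y⟫

def defectB (X Y : V) : ℝ := ⟪T.R X (T.J X) Y, X⟫ + ⟪T.R Y (T.J Y) X, Y⟫

def defectC (X Y : V) : ℝ := ⟪T.R X Y X, T.J Y⟫

lemma defectA_J_right (X Y : V) : T.defectA X (T.J Y) = T.defectB X Y := by
  rw [defectA, defectB, T.inner_R_J_J, T.J_sq, T.R_neg_mid, T.R_swap Y (T.J Y), inner_neg_left,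
    inner_neg_left, inner_neg_right]
  ring

lemma defectB_J_right (X Y : V) : T.defectB X (T.J Y) = -T.defectA X Y := by
  rw [defectA, defectB, T.inner_R_J_left, T.J_sq, T.R_neg_mid, T.R_swap Y (T.J Y), inner_neg_left,
    inner_neg_left]
  ring

lemma defectC_rotate (X Y : V) :
    T.defectC ((√2)⁻¹ • (X + Y)) ((√2)⁻¹ • (X - Y)) = T.defectB X Y / 2 := by
  have hXY : ⟪T.R X Y Y, T.J X⟫ = ⟪T.R X Y X, T.J Y⟫ := by
    rw [T.antisymm₂, T.inner_R_J_left, neg_neg]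
  have hX : ⟪T.R X Y X, T.J X⟫ = -⟪T.R X (T.J X) Y, X⟫ := by
    rw [T.pair_symm, T.antisymm₂]
  have hY : ⟪T.R X Y Y, T.J Y⟫ = ⟪T.R Y (T.J Y) X, Y⟫ := T.pair_symm _ _ _ _
  simp only [defectC, defectB, map_smul, map_sub, T.R_smul_left, T.R_smul_mid, T.R_smul_right,
    real_inner_smul_left, real_inner_smul_right, T.R_add_sub, T.R_add_right, inner_add_left,
    inner_sub_right]
  linear_combination -2 * (√2)⁻¹ ^ 4 * (hX + hXY - hY) +
    2 * (⟪T.R X (T.J X) Y, X⟫ + ⟪T.R Y (T.J Y) X, Y⟫) * inv_sqrt_two_pow_four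

lemma defectB_rotate (X Y : V) :
    T.defectB ((√2)⁻¹ • (X + Y)) ((√2)⁻¹ • (X - Y)) = 2 * T.defectC X Y := by
  have h := T.defectC_rotate ((√2)⁻¹ • (X + Y)) ((√2)⁻¹ • (X - Y))
  rw [inv_sqrt_two_smul_add_of_add_sub, inv_sqrt_two_smul_sub_of_add_sub] at h
  linarith

lemma forall_defectA_iff_forall_defectB :
    (∀ X Y : V, Orthonormal ℝ ![X, T.J X, Y, T.J Y] → T.defectA X Y = 0) ↔
      ∀ X Y : V, Orthonormal ℝ ![X, T.J X, Y, T.J Y] → T.defectB X Y = 0 := by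
  refine ⟨fun h X Y hXY => ?_, fun h X Y hXY => ?_⟩
  · rw [← T.defectA_J_right]
    exact h X (T.J Y) (T.orthonormal_frame_J_right hXY)
  · rw [← neg_eq_zero, ← T.defectB_J_right]
    exact h X (T.J Y) (T.orthonormal_frame_J_right hXY)

lemma forall_defectB_iff_forall_defectC :
    (∀ X Y : V, Orthonormal ℝ ![X, T.J X, Y, T.J Y] → T.defectB X Y = 0) ↔
      ∀ X Y : V, Orthonormal ℝ ![X, T.J X, Y, T.J Y] → T.defectC X Y = 0 := by
  refine ⟨fun h X Y hXY => ?_, fun h X Y hXY => ?_⟩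
  · have := h _ _ (T.orthonormal_frame_rotate hXY)
    rw [T.defectB_rotate] at this
    linarith
  · have := h _ _ (T.orthonormal_frame_rotate hXY)
    rw [T.defectC_rotate] at this
    linarith

end KahlerModel

theorem xy_equivalences_general {V : Type*} [NormedAddCommGroup V] [InnerProductSpace ℝ V]
    (T : KahlerModel V) :
    [(∀ X Y : V, Orthonormal ℝ ![X, T.J X, Y, T.J Y] →
        ⟪T.R X (T.J X) Y, T.J X⟫ = ⟪T.R Y (T.J Y) X, T.J Y⟫),
     (∀ X Y : V, Orthonormal ℝ ![X, T.J X, Y, T.J Y] →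
        ⟪T.R X (T.J X) Y, X⟫ = -⟪T.R Y (T.J Y) X, Y⟫),
     (∀ X Y : V, Orthonormal ℝ ![X, T.J X, Y, T.J Y] →
        ⟪T.R X Y X, T.J Y⟫ = 0)].TFAE := by
  tfae_have 1 ↔ 2 := by
    simpa only [KahlerModel.defectA, KahlerModel.defectB, sub_eq_zero, ← eq_neg_iff_add_eq_zero]
      using T.forall_defectA_iff_forall_defectB
  tfae_have 2 ↔ 3 := by
    simpa only [KahlerModel.defectB, KahlerModel.defectC, ← eq_neg_iff_add_eq_zero]
      using T.forall_defectB_iff_forall_defectC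
  tfae_finish

theorem xy_equivalences {V : Type*} [NormedAddCommGroup V] [InnerProductSpace ℝ V] [FiniteDimensional ℝ V]
    (T : KahlerModel V) (m : ℕ) (hm : 2 ≤ m) (hdim : finrank ℝ V = 2 * m) :
    [(∀ X Y : V, Orthonormal ℝ ![X, T.J X, Y, T.J Y] →
        ⟪T.R X (T.J X) Y, T.J X⟫ = ⟪T.R Y (T.J Y) X, T.J Y⟫),
     (∀ X Y : V, Orthonormal ℝ ![X, T.J X, Y, T.J Y] →
        ⟪T.R X (T.J X) Y, X⟫ = -⟪T.R Y (T.J Y) X, Y⟫),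
     (∀ X Y : V, Orthonormal ℝ ![X, T.J X, Y, T.J Y] →
        ⟪T.R X Y X, T.J Y⟫ = 0)].TFAE :=
  xy_equivalences_general T
end
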